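/- Let h > 0, ω ≥ 1, and let K ⊆ ℝ² be a convex Lebesgue-measurable set of finite positive measure with diameter at most h, and r₀ ∈ K. Let φ : ℝ² → ℝ be twice continuously differentiable with the operator norm of its Hessian bounded by M on K, and suppose ξ₀ := |∇φ(r₀)|² > 0 and ∇φ(r₀) = √ξ₀ (cos θ, sin θ) for some θ ∈ ℝ. Let A₀ : ℝ² → ℂ be Lipschitz with constant L on K and satisfy |A₀(r)| ≤ L₀ on K; let γ = (1/|K|)∫_K A₀. Let C₀, C₁ ≥ 0, let θ_h ∈ ℝ satisfy |θ_h − θ| ≤ C₁/ω, and let R : ℝ² → ℂ satisfy |R(r)| ≤ C₀/ω on K. Define u(r) = A₀(r)·exp(i ω φ(r)) + R(r), τ_h(r) = √ξ₀ (cos θ_h, sin θ_h)·(r − r₀), and π_h u(r) = γ·exp(i ω φ(r₀))·exp(i ω τ_h(r)). Then ( ∫_K |u(r) − π_h u(r)|² dr )^{1/2} ≤ |K|^{1/2} · [ (L + L₀ √ξ₀ C₁) h + (M L₀ / 2) ω h² + C₀/ω ]. In particular the L²(K)-interpolation error is bounded by C·(ω^{−1} + h + ω h²) with C depending only on L, L₀,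 M, √ξ₀, C₀, C₁ and |K|. -/

import Mathlib

/-! At each point of `K`,
`u - π_h u = (A₀ - γ) e^{iωφ} + γ (e^{iωφ} - e^{iω(φ(r₀) + τ_h)}) + R`.
The first term is at most `L h`, since the average `γ` lies in every closed ball that contains
the values of `A₀` on `K`. The second is at most `L₀ ω |φ - φ(r₀) - τ_h|`, and this phase error
is the second order Taylor remainder of `φ` at `r₀`, at most `(M/2) h²`, plus the error
`√ξ₀ ⟪(cos θ - cos θ_h, sin θ - sin θ_h), r - r₀⟫` of the ray direction, at most
`√ξ₀ |θ - θ_h| h`. The third is at most `C₀/ω`. Integrating the square of this pointwise bound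
over `K` gives the factor `|K|^{1/2}`. -/

open MeasureTheory

lemma norm_exp_I_mul_sub_exp_I_mul_le (a b : ℝ) :
    ‖Complex.exp (Complex.I * a) - Complex.exp (Complex.I * b)‖ ≤ |a - b| := by
  have hfactor : Complex.exp (Complex.I * a) - Complex.exp (Complex.I * b) =
      Complex.exp (Complex.I * b) * (Complex.exp (Complex.I * ↑(a - b)) - 1) := by
    rw [mul_sub, ← Complex.exp_add]
    push_cast
    ring_nf
  rw [hfactor, norm_mul, Complex.norm_exp_I_mul_ofReal, one_mul]
  exact Real.norm_exp_I_mul_ofReal_sub_one_le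

lemma abs_cos_sub_cos_mul_add_sin_sub_sin_mul_le (a b x y : ℝ) :
    |(Real.cos a - Real.cos b) * x + (Real.sin a - Real.sin b) * y| ≤
      |a - b| * √(x ^ 2 + y ^ 2) := by
  have hre : (Real.cos a - Real.cos b) * x + (Real.sin a - Real.sin b) * y =
      (starRingEnd ℂ (Complex.exp (Complex.I * a) - Complex.exp (Complex.I * b)) *
        (x + y * Complex.I)).re := by
    rw [mul_comm Complex.I, mul_comm Complex.I, Complex.exp_mul_I, Complex.exp_mul_I,
      ← Complex.ofReal_cos, ← Complex.ofReal_sin, ← Complex.ofReal_cos, ← Complex.ofReal_sin]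
    simp only [map_sub, map_add, map_mul, Complex.conj_ofReal, Complex.conj_I, Complex.mul_re,
      Complex.sub_re, Complex.add_re, Complex.mul_im, Complex.sub_im, Complex.add_im,
      Complex.ofReal_re, Complex.ofReal_im, Complex.I_re, Complex.I_im, Complex.neg_re,
      Complex.neg_im]
    ring
  rw [hre, ← Complex.norm_add_mul_I]
  calc _ ≤ _ := Complex.abs_re_le_norm _
    _ = _ := by rw [norm_mul, Complex.norm_conj]
    _ ≤ _ := by gcongr; exact norm_exp_I_mul_sub_exp_I_mul_le a b

theorem Convex.norm_image_sub_sub_fderiv_le {E F : Type*} [NormedAddCommGroup E]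
    [NormedSpace ℝ E] [NormedAddCommGroup F] [NormedSpace ℝ F] {s : Set E} (hs : Convex ℝ s)
    {f : E → F} (hf : ∀ x ∈ s, DifferentiableAt ℝ f x)
    (hf' : ∀ x ∈ s, DifferentiableAt ℝ (fderiv ℝ f) x) {M : ℝ}
    (hM : ∀ x ∈ s, ‖fderiv ℝ (fderiv ℝ f) x‖ ≤ M) {x y : E} (hx : x ∈ s) (hy : y ∈ s) :
    ‖f y - f x - fderiv ℝ f x (y - x)‖ ≤ M / 2 * ‖y - x‖ ^ 2 := by
  set v := y - x
  have hseg : ∀ t ∈ Set.Icc (0 : ℝ) 1, x + t • v ∈ s := fun t ht =>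
    hs.add_smul_sub_mem hx hy ht
  have hderiv : ∀ t ∈ Set.Icc (0 : ℝ) 1,
      HasDerivAt (fun t : ℝ => f (x + t • v) - f x - t • fderiv ℝ f x v)
        (fderiv ℝ f (x + t • v) v - fderiv ℝ f x v) t := fun t ht => by
    have hline : HasDerivAt (fun t : ℝ => x + t • v) v t := by
      simpa using ((hasDerivAt_id t).smul_const v).const_add x
    exact (((hf _ (hseg t ht)).hasFDerivAt.comp_hasDerivAt t hline).sub_const (f x)).sub
      (by simpa using (hasDerivAt_id t).smul_const (fderiv ℝ f x v))
  have hbound : ∀ t ∈ Set.Ico (0 : ℝ) 1,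
      ‖fderiv ℝ f (x + t • v) v - fderiv ℝ f x v‖ ≤ M * ‖v‖ ^ 2 * t := fun t ht => by
    have hmv := hs.norm_image_sub_le_of_norm_fderiv_le hf' hM hx
      (hseg t (Set.Ico_subset_Icc_self ht))
    rw [add_sub_cancel_left, norm_smul, Real.norm_of_nonneg ht.1] at hmv
    calc _ = ‖(fderiv ℝ f (x + t • v) - fderiv ℝ f x) v‖ := rfl
      _ ≤ ‖fderiv ℝ f (x + t • v) - fderiv ℝ f x‖ * ‖v‖ := ContinuousLinearMap.le_opNorm _ _
      _ ≤ M * (t * ‖v‖) * ‖v‖ := by gcongr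
      _ = _ := by ring
  -- `(M/2) ‖v‖² t²` is a barrier for the remainder along the segment, so no integration is needed.
  have := image_norm_le_of_norm_deriv_right_le_deriv_boundary (a := 0) (b := 1)
    (B := fun t => M / 2 * ‖v‖ ^ 2 * t ^ 2) (B' := fun t => M * ‖v‖ ^ 2 * t)
    (fun t ht => (hderiv t ht).continuousAt.continuousWithinAt)
    (fun t ht => (hderiv t (Set.Ico_subset_Icc_self ht)).hasDerivWithinAt) (by simp)
    (fun t => ((hasDerivAt_pow 2 t).const_mul _).congr_deriv (by push_cast; ring))
    hbound (Set.right_mem_Icc.2 zero_le_one)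
  simpa [v] using this

lemma nonneg_of_norm_sub_le_mul_norm_sub {E F : Type*} [NormedAddCommGroup E]
    [SeminormedAddCommGroup F] {s : Set E} (hs : s.Nontrivial) {f : E → F} {L : ℝ}
    (hf : ∀ x ∈ s, ∀ y ∈ s, ‖f x - f y‖ ≤ L * ‖x - y‖) : 0 ≤ L := by
  obtain ⟨x, hx, y, hy, hxy⟩ := hs
  exact nonneg_of_mul_nonneg_left ((norm_nonneg _).trans (hf x hx y hy))
    (norm_pos_iff.2 (sub_ne_zero.2 hxy))

lemma sqrt_setIntegral_norm_sq_le {α E : Type*} [MeasurableSpace α] [NormedAddCommGroup E]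
    {μ : Measure α} {s : Set α} (hs : MeasurableSet s) (hμs : μ s ≠ ⊤) {g : α → E} {B : ℝ}
    (hg : ∀ x ∈ s, ‖g x‖ ≤ B) :
    √(∫ x in s, ‖g x‖ ^ 2 ∂μ) ≤ √(μ.real s) * B := by
  rcases s.eq_empty_or_nonempty with rfl | ⟨x₀, hx₀⟩
  · simp
  have hB : 0 ≤ B := (norm_nonneg _).trans (hg x₀ hx₀)
  have hint : ∫ x in s, ‖g x‖ ^ 2 ∂μ ≤ μ.real s * B ^ 2 :=
    calc _ ≤ ∫ _ in s, B ^ 2 ∂μ :=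
          integral_mono_of_nonneg (ae_of_all _ fun _ => sq_nonneg _) (integrableOn_const hμs)
            (ae_restrict_of_forall_mem hs fun x hx => pow_le_pow_left₀ (norm_nonneg _) (hg x hx) 2)
      _ = _ := by rw [setIntegral_const, smul_eq_mul]
  calc _ ≤ √(μ.real s * B ^ 2) := Real.sqrt_le_sqrt hint
    _ = _ := by rw [Real.sqrt_mul measureReal_nonneg, Real.sqrt_sq hB]

lemma dist_setAverage_le {α E : Type*} [MeasurableSpace α] [NormedAddCommGroup E]
    [NormedSpace ℝ E] [CompleteSpace E] {μ : Measure α} {s : Set α} (hs : MeasurableSet s)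
    (hμ₀ : μ s ≠ 0) (hμ : μ s ≠ ⊤) {f : α → E} (hf : IntegrableOn f s μ) {c : E} {ρ : ℝ}
    (hfc : ∀ x ∈ s, dist (f x) c ≤ ρ) : dist (⨍ x in s, f x ∂μ) c ≤ ρ :=
  (convex_closedBall c ρ).set_average_mem Metric.isClosed_closedBall hμ₀ hμ
    (ae_restrict_of_forall_mem hs hfc) hf

lemma norm_mul_exp_add_sub_mul_exp_le (A γ R : ℂ) (a b : ℝ) :
    ‖A * Complex.exp (Complex.I * a) + R - γ * Complex.exp (Complex.I * b)‖ ≤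
      ‖A - γ‖ + ‖γ‖ * |a - b| + ‖R‖ := by
  have hsplit : A * Complex.exp (Complex.I * a) + R - γ * Complex.exp (Complex.I * b) =
      (A - γ) * Complex.exp (Complex.I * a) +
        γ * (Complex.exp (Complex.I * a) - Complex.exp (Complex.I * b)) + R := by
    ring
  rw [hsplit]
  refine norm_add₃_le.trans ?_
  rw [norm_mul, norm_mul, Complex.norm_exp_I_mul_ofReal, mul_one]
  gcongr
  exact norm_exp_I_mul_sub_exp_I_mul_le a b

lemma abs_sub_sub_plane_wave_phase_le {K : Set (EuclideanSpace ℝ (Fin 2))} (hK : Convex ℝ K)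
    {φ : EuclideanSpace ℝ (Fin 2) → ℝ} (hφ : ContDiff ℝ 2 φ) {M : ℝ}
    (hM : ∀ x ∈ K, ‖fderiv ℝ (fderiv ℝ φ) x‖ ≤ M) {r₀ r : EuclideanSpace ℝ (Fin 2)}
    (hr₀ : r₀ ∈ K) (hr : r ∈ K) {ρ θ θh : ℝ} (hρ : 0 ≤ ρ)
    (hθ₀ : gradient φ r₀ 0 = ρ * Real.cos θ) (hθ₁ : gradient φ r₀ 1 = ρ * Real.sin θ) :
    |φ r - φ r₀ - ρ * (Real.cos θh * (r 0 - r₀ 0) + Real.sin θh * (r 1 - r₀ 1))| ≤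
      M / 2 * ‖r - r₀‖ ^ 2 + ρ * |θ - θh| * ‖r - r₀‖ := by
  have hlin : fderiv ℝ φ r₀ (r - r₀) =
      ρ * (Real.cos θ * (r 0 - r₀ 0) + Real.sin θ * (r 1 - r₀ 1)) := by
    rw [← inner_gradient_left, PiLp.inner_apply, Fin.sum_univ_two]
    simp only [hθ₀, hθ₁, PiLp.sub_apply, RCLike.inner_apply, Real.ringHom_apply]
    ring
  have hnorm : ‖r - r₀‖ = √((r 0 - r₀ 0) ^ 2 + (r 1 - r₀ 1) ^ 2) := by
    simp [EuclideanSpace.norm_eq, Fin.sum_univ_two]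
  have htaylor := hK.norm_image_sub_sub_fderiv_le
    (fun x _ => (hφ.differentiable two_ne_zero).differentiableAt)
    (fun x _ => ((hφ.fderiv_right (m := 1) le_rfl).differentiable one_ne_zero).differentiableAt)
    hM hr₀ hr
  have hdir := abs_cos_sub_cos_mul_add_sin_sub_sin_mul_le θ θh (r 0 - r₀ 0) (r 1 - r₀ 1)
  rw [Real.norm_eq_abs, hlin] at htaylor
  rw [← hnorm] at hdir
  calc _ = |(φ r - φ r₀ - ρ * (Real.cos θ * (r 0 - r₀ 0) + Real.sin θ * (r 1 - r₀ 1))) +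
        ρ * ((Real.cos θ - Real.cos θh) * (r 0 - r₀ 0) +
          (Real.sin θ - Real.sin θh) * (r 1 - r₀ 1))| := by ring_nf
    _ ≤ _ := (abs_add_le _ _).trans (by rw [abs_mul, abs_of_nonneg hρ, mul_assoc]; gcongr)

theorem adaptive_plane_wave_L2_interpolation_error_general
    (h ω : ℝ) (hh : 0 < h) (hω : 1 ≤ ω)
    (K : Set (EuclideanSpace ℝ (Fin 2))) (hKmeas : MeasurableSet K) (hKconv : Convex ℝ K)
    (hKpos : 0 < volume K) (hKfin : volume K < ⊤)
    (hdiam : EMetric.diam K ≤ ENNReal.ofReal h)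
    (r₀ : EuclideanSpace ℝ (Fin 2)) (hr₀ : r₀ ∈ K)
    (φ : EuclideanSpace ℝ (Fin 2) → ℝ) (hφ : ContDiff ℝ 2 φ)
    (M : ℝ) (hM : ∀ x ∈ K, ‖fderiv ℝ (fderiv ℝ φ) x‖ ≤ M)
    (ξ₀ θ : ℝ)
    (hθ₀ : gradient φ r₀ 0 = Real.sqrt ξ₀ * Real.cos θ)
    (hθ₁ : gradient φ r₀ 1 = Real.sqrt ξ₀ * Real.sin θ)
    (A₀ : EuclideanSpace ℝ (Fin 2) → ℂ) (L L₀ : ℝ)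
    (hA₀lip : ∀ r ∈ K, ∀ r' ∈ K, ‖A₀ r - A₀ r'‖ ≤ L * ‖r - r'‖)
    (hA₀bd : ∀ r ∈ K, ‖A₀ r‖ ≤ L₀)
    (γ : ℂ) (hγ : γ = ((volume K).toReal)⁻¹ • ∫ r in K, A₀ r)
    (C₀ C₁ : ℝ)
    (θh : ℝ) (hθh : |θh - θ| ≤ C₁ / ω)
    (R : EuclideanSpace ℝ (Fin 2) → ℂ) (hR : ∀ r ∈ K, ‖R r‖ ≤ C₀ / ω)
    (u πu : EuclideanSpace ℝ (Fin 2) → ℂ) (τ : EuclideanSpace ℝ (Fin 2) → ℝ)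
    (hu : ∀ r, u r = A₀ r * Complex.exp (Complex.I * ω * φ r) + R r)
    (hτ : ∀ r, τ r = Real.sqrt ξ₀ *
      (Real.cos θh * (r 0 - r₀ 0) + Real.sin θh * (r 1 - r₀ 1)))
    (hπ : ∀ r, πu r = γ * Complex.exp (Complex.I * ω * φ r₀) *
      Complex.exp (Complex.I * ω * τ r)) :
    Real.sqrt (∫ r in K, ‖u r - πu r‖ ^ 2) ≤
      Real.sqrt (volume K).toReal *
        ((L + L₀ * Real.sqrt ξ₀ * C₁) * h + (M * L₀ / 2) * ω * h ^ 2 + C₀ / ω) := by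
  have hω₀ : 0 < ω := one_pos.trans_le hω
  have hL₀ : 0 ≤ L₀ := (norm_nonneg _).trans (hA₀bd r₀ hr₀)
  have hM₀ : 0 ≤ M := (norm_nonneg (fderiv ℝ (fderiv ℝ φ) r₀)).trans (hM r₀ hr₀)
  have hdist : ∀ r ∈ K, ∀ r' ∈ K, ‖r - r'‖ ≤ h := fun r hr r' hr' => by
    rw [← dist_eq_norm]
    exact (edist_le_ofReal hh.le).1 ((Metric.edist_le_ediam_of_mem hr hr').trans hdiam)
  have hL : 0 ≤ L := nonneg_of_norm_sub_le_mul_norm_sub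
    (Set.not_subsingleton_iff.1 fun hK => hKpos.ne' (hK.measure_zero _)) hA₀lip
  have hA₀int : IntegrableOn A₀ K := (integrableOn_const hKfin.ne).mono'
    ((LipschitzOnWith.of_dist_le' (f := A₀) (K := L) (by simpa [dist_eq_norm] using hA₀lip)
      ).continuousOn.aestronglyMeasurable hKmeas)
    (ae_restrict_of_forall_mem hKmeas hA₀bd)
  have hγ_avg : γ = ⨍ r in K, A₀ r := by rw [hγ, setAverage_eq, measureReal_def]
  have hγ_le : ‖γ‖ ≤ L₀ := by
    simpa [hγ_avg] using dist_setAverage_le hKmeas hKpos.ne' hKfin.ne hA₀int (c := 0)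
      (by simpa using hA₀bd)
  have hA₀_sub_γ : ∀ r ∈ K, ‖A₀ r - γ‖ ≤ L * h := fun r hr => by
    rw [← dist_eq_norm, dist_comm, hγ_avg]
    refine dist_setAverage_le hKmeas hKpos.ne' hKfin.ne hA₀int fun r' hr' => ?_
    rw [dist_eq_norm]
    exact (hA₀lip r' hr' r hr).trans (mul_le_mul_of_nonneg_left (hdist r' hr' r hr) hL)
  refine sqrt_setIntegral_norm_sq_le hKmeas hKfin.ne fun r hr => ?_
  have hphase : |ω * φ r - ω * (φ r₀ + τ r)| ≤ √ξ₀ * C₁ * h + M / 2 * ω * h ^ 2 := by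
    have hΔ := hdist r hr r₀ hr₀
    have htaylor := abs_sub_sub_plane_wave_phase_le hKconv hφ hM hr₀ hr (Real.sqrt_nonneg ξ₀)
      hθ₀ hθ₁ (θh := θh)
    rw [← hτ, abs_sub_comm θ] at htaylor
    calc _ = ω * |φ r - φ r₀ - τ r| := by
          rw [← mul_sub, abs_mul, abs_of_pos hω₀, sub_add_eq_sub_sub]
      _ ≤ ω * (M / 2 * h ^ 2 + √ξ₀ * (C₁ / ω) * h) := by
          refine mul_le_mul_of_nonneg_left (htaylor.trans ?_) hω₀.le
          gcongr
          exact mul_nonneg (Real.sqrt_nonneg ξ₀) ((abs_nonneg _).trans hθh)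
      _ = _ := by field_simp; ring
  have hsplit : u r - πu r = A₀ r * Complex.exp (Complex.I * ↑(ω * φ r)) + R r -
      γ * Complex.exp (Complex.I * ↑(ω * (φ r₀ + τ r))) := by
    rw [hu, hπ, mul_assoc γ, ← Complex.exp_add]
    push_cast
    ring_nf
  rw [hsplit]
  calc _ ≤ _ := norm_mul_exp_add_sub_mul_exp_le _ _ _ _ _
    _ ≤ L * h + L₀ * (√ξ₀ * C₁ * h + M / 2 * ω * h ^ 2) + C₀ / ω := by
        gcongr
        exacts [hA₀_sub_γ r hr, hR r hr]
    _ = _ := by ring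

/-- Single-wave best-approximation bound for the adaptive plane wave space:
if `u = A₀·exp(iωφ) + R` on an element `K` of diameter at most `h` (barycenter `r₀`),
`∇φ(r₀) = √ξ₀(cos θ, sin θ)` with `ξ₀ = |∇φ(r₀)|² > 0`, the Hessian of `φ` is bounded
by `M` on `K`, `A₀` is Lipschitz with constant `L` and bounded by `L₀` on `K`,
`|θ_h − θ| ≤ C₁/ω`, `|R| ≤ C₀/ω` on `K`, and
`π_h u(r) = γ·exp(iωφ(r₀))·exp(iωτ_h(r))` with `γ` the integral average of `A₀` on `K`
and `τ_h(r) = √ξ₀(cos θ_h, sin θ_h)·(r − r₀)`, then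
`‖u − π_h u‖_{L²(K)} ≤ |K|^{1/2}·[(L + L₀√ξ₀C₁)h + (ML₀/2)ωh² + C₀/ω]`. -/
theorem adaptive_plane_wave_L2_interpolation_error
    (h ω : ℝ) (hh : 0 < h) (hω : 1 ≤ ω)
    (K : Set (EuclideanSpace ℝ (Fin 2))) (hKmeas : MeasurableSet K) (hKconv : Convex ℝ K)
    (hKpos : 0 < volume K) (hKfin : volume K < ⊤)
    (hdiam : EMetric.diam K ≤ ENNReal.ofReal h)
    (r₀ : EuclideanSpace ℝ (Fin 2)) (hr₀ : r₀ ∈ K)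
    (φ : EuclideanSpace ℝ (Fin 2) → ℝ) (hφ : ContDiff ℝ 2 φ)
    (M : ℝ) (hM : ∀ x ∈ K, ‖fderiv ℝ (fderiv ℝ φ) x‖ ≤ M)
    (ξ₀ θ : ℝ) (hξ₀ : ξ₀ = ‖gradient φ r₀‖ ^ 2) (hξ₀pos : 0 < ξ₀)
    (hθ₀ : gradient φ r₀ 0 = Real.sqrt ξ₀ * Real.cos θ)
    (hθ₁ : gradient φ r₀ 1 = Real.sqrt ξ₀ * Real.sin θ)
    (A₀ : EuclideanSpace ℝ (Fin 2) → ℂ) (L L₀ : ℝ)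
    (hA₀lip : ∀ r ∈ K, ∀ r' ∈ K, ‖A₀ r - A₀ r'‖ ≤ L * ‖r - r'‖)
    (hA₀bd : ∀ r ∈ K, ‖A₀ r‖ ≤ L₀)
    (γ : ℂ) (hγ : γ = ((volume K).toReal)⁻¹ • ∫ r in K, A₀ r)
    (C₀ C₁ : ℝ) (hC₀ : 0 ≤ C₀) (hC₁ : 0 ≤ C₁)
    (θh : ℝ) (hθh : |θh - θ| ≤ C₁ / ω)
    (R : EuclideanSpace ℝ (Fin 2) → ℂ) (hR : ∀ r ∈ K, ‖R r‖ ≤ C₀ / ω)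
    (u πu : EuclideanSpace ℝ (Fin 2) → ℂ) (τ : EuclideanSpace ℝ (Fin 2) → ℝ)
    (hu : ∀ r, u r = A₀ r * Complex.exp (Complex.I * ω * φ r) + R r)
    (hτ : ∀ r, τ r = Real.sqrt ξ₀ *
      (Real.cos θh * (r 0 - r₀ 0) + Real.sin θh * (r 1 - r₀ 1)))
    (hπ : ∀ r, πu r = γ * Complex.exp (Complex.I * ω * φ r₀) *
      Complex.exp (Complex.I * ω * τ r)) :
    Real.sqrt (∫ r in K, ‖u r - πu r‖ ^ 2) ≤
      Real.sqrt (volume K).toReal *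
        ((L + L₀ * Real.sqrt ξ₀ * C₁) * h + (M * L₀ / 2) * ω * h ^ 2 + C₀ / ω) :=
  adaptive_plane_wave_L2_interpolation_error_general h ω hh hω K hKmeas hKconv hKpos hKfin hdiam r₀
    hr₀ φ hφ M hM ξ₀ θ hθ₀ hθ₁ A₀ L L₀ hA₀lip hA₀bd γ hγ C₀ C₁ θh hθh R hR u πu τ hu hτ hπ
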